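/- Let ψ : EuclideanSpace ℝ (Fin 3) → (Fin 2 → ℂ) be a C² map satisfying the Dirac equation D̸ψ = 0 everywhere. Then at every point x where ψ(x) ≠ 0 one has the Lichnerowicz-type inequality 2 Δ(‖ψ‖²)(x) ≥ ‖∇(‖ψ‖²)(x)‖² / ‖ψ(x)‖², where ‖ψ‖² denotes the real-valued function x ↦ ‖ψ(x)‖² (squared Hermitian norm). -/

import Mathlib

open Complex Matrix

noncomputable section

/-- The Pauli matrices. -/
def pauli : Fin 3 → Matrix (Fin 2) (Fin 2) ℂ :=
  ![!![0, 1; 1, 0], !![0, -I; I, 0], !![1, 0; 0, -1]]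

/-- Clifford multiplication: `e_k = I • σ_k`. -/
def cliff (k : Fin 3) : Matrix (Fin 2) (Fin 2) ℂ := I • pauli k

/-- The Dirac operator on spinors over flat `ℝ³`. -/
def dirac (ψ : EuclideanSpace ℝ (Fin 3) → (Fin 2 → ℂ)) (x : EuclideanSpace ℝ (Fin 3)) :
    Fin 2 → ℂ :=
  ∑ k, (cliff k).mulVec (fderiv ℝ ψ x (EuclideanSpace.single k 1))

/-- Laplacian of a real-valued function: trace of the second Fréchet derivative. -/
def elap2 {n : ℕ} (f : EuclideanSpace ℝ (Fin n) → ℝ) (x : EuclideanSpace ℝ (Fin n)) : ℝ :=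
  ∑ i, iteratedFDeriv ℝ 2 f x ![EuclideanSpace.single i 1, EuclideanSpace.single i 1]

lemma cliff_sq (j : Fin 3) : cliff j * cliff j = -1 := by
  fin_cases j <;>
  · ext i k
    fin_cases i <;> fin_cases k <;>
      simp [cliff, pauli, Matrix.mul_apply, Fin.sum_univ_two, Matrix.one_apply]

lemma cliff_anticomm (j k : Fin 3) (h : j ≠ k) : cliff j * cliff k = -(cliff k * cliff j) := by
  fin_cases j <;> fin_cases k <;> first
  | exact absurd rfl h
  | · ext i l
      fin_cases i <;> fin_cases l <;>
        simp [cliff, pauli, Matrix.mul_apply, Fin.sum_univ_two]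

abbrev E3 := EuclideanSpace ℝ (Fin 3)
abbrev F2 := Fin 2 → ℂ
def ee (j : Fin 3) : E3 := EuclideanSpace.single j 1

def MV (k : Fin 3) : F2 →L[ℝ] F2 :=
  LinearMap.toContinuousLinearMap (((cliff k).mulVecLin).restrictScalars ℝ)

lemma MV_apply (k : Fin 3) (w : F2) : MV k w = (cliff k).mulVec w := rfl

lemma harmonic_spinor (ψ : E3 → F2) (hψ : ContDiff ℝ 2 ψ)
    (hdirac : ∀ x, dirac ψ x = 0) (x : E3) :
    ∑ j, fderiv ℝ (fderiv ℝ ψ) x (ee j) (ee j) = 0 := by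
  have hΦ : ContDiff ℝ 1 (fderiv ℝ ψ) := hψ.fderiv_right (le_refl 2)
  have hΦx : HasFDerivAt (fderiv ℝ ψ) (fderiv ℝ (fderiv ℝ ψ) x) x :=
    ((hΦ.differentiable one_ne_zero) x).hasFDerivAt
  set B : E3 →L[ℝ] E3 →L[ℝ] F2 := fderiv ℝ (fderiv ℝ ψ) x with hB
  have hterm : ∀ k : Fin 3, HasFDerivAt (fun y => (cliff k).mulVec (fderiv ℝ ψ y (ee k)))
      ((MV k).comp ((ContinuousLinearMap.apply ℝ F2 (ee k)).comp B)) x := by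
    intro k
    exact (MV k).hasFDerivAt.comp x
      ((ContinuousLinearMap.apply ℝ F2 (ee k)).hasFDerivAt.comp x hΦx)
  have hsum0 : HasFDerivAt (fun y => ∑ k : Fin 3, (cliff k).mulVec (fderiv ℝ ψ y (ee k)))
      (∑ k, (MV k).comp ((ContinuousLinearMap.apply ℝ F2 (ee k)).comp B)) x :=
    by apply HasFDerivAt.fun_sum; intro k _; exact hterm k
  have hsum : HasFDerivAt (dirac ψ)
      (∑ k, (MV k).comp ((ContinuousLinearMap.apply ℝ F2 (ee k)).comp B)) x := hsum0
  have hzero : HasFDerivAt (dirac ψ) (0 : E3 →L[ℝ] F2) x := by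
    have : dirac ψ = fun _ => (0 : F2) := funext hdirac
    rw [this]; exact hasFDerivAt_const _ _
  have hD : (∑ k, (MV k).comp ((ContinuousLinearMap.apply ℝ F2 (ee k)).comp B)) = 0 :=
    hsum.unique hzero
  have H : ∀ j : Fin 3, ∑ k, (cliff k).mulVec (B (ee j) (ee k)) = 0 := by
    intro j
    have h3 : (∑ k, (MV k).comp ((ContinuousLinearMap.apply ℝ F2 (ee k)).comp B)) (ee j) = 0 := by
      rw [hD]; rfl
    simpa [ContinuousLinearMap.sum_apply, MV_apply] using h3
  have Bsymm : ∀ j k : Fin 3, B (ee j) (ee k) = B (ee k) (ee j) := by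
    intro j k
    exact (hψ.contDiffAt.isSymmSndFDerivAt (by norm_num)) (ee j) (ee k)
  have H2 : ∀ j : Fin 3, ∑ k, (cliff j * cliff k).mulVec (B (ee j) (ee k)) = 0 := by
    intro j
    have := congrArg (cliff j).mulVec (H j)
    rw [Matrix.mulVec_zero] at this
    rw [← this]
    rw [show (cliff j *ᵥ ∑ k : Fin 3, cliff k *ᵥ (B (ee j)) (ee k))
        = ∑ k : Fin 3, cliff j *ᵥ (cliff k *ᵥ (B (ee j)) (ee k)) from
      map_sum ((cliff j).mulVecLin) _ _]
    simp only [Matrix.mulVec_mulVec]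
  have H3 : ∑ j : Fin 3, ∑ k : Fin 3, (cliff j * cliff k).mulVec (B (ee j) (ee k)) = 0 := by
    simp only [H2, Finset.sum_const_zero]
  rw [Fin.sum_univ_three] at H3
  rw [Fin.sum_univ_three, Fin.sum_univ_three, Fin.sum_univ_three] at H3
  rw [Bsymm 1 0, Bsymm 2 0, Bsymm 2 1] at H3
  rw [cliff_anticomm 1 0 (by decide), cliff_anticomm 2 0 (by decide),
    cliff_anticomm 2 1 (by decide)] at H3
  rw [cliff_sq 0, cliff_sq 1, cliff_sq 2] at H3
  simp only [Matrix.neg_mulVec, Matrix.one_mulVec] at H3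
  rw [Fin.sum_univ_three]
  abel_nf at H3 ⊢
  linear_combination (norm := abel) -H3

abbrev V2 := EuclideanSpace ℂ (Fin 2)
def Tc : F2 →L[ℝ] V2 :=
  ((EuclideanSpace.equiv (Fin 2) ℂ).symm : F2 →L[ℂ] V2).restrictScalars ℝ

/-- Lichnerowicz-type inequality for harmonic spinors on flat `ℝ³`:
`2 Δ‖ψ‖² ≥ ‖∇‖ψ‖²‖² / ‖ψ‖²` wherever `ψ ≠ 0`. -/
theorem lichnerowicz_inequality_harmonic_spinor
    (ψ : EuclideanSpace ℝ (Fin 3) → (Fin 2 → ℂ)) (hψ : ContDiff ℝ 2 ψ)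
    (hdirac : ∀ x, dirac ψ x = 0) :
    ∀ x, ψ x ≠ 0 →
      2 * elap2 (fun y => ∑ j, Complex.normSq (ψ y j)) x ≥
        ‖gradient (fun y => ∑ j, Complex.normSq (ψ y j)) x‖ ^ 2 /
          (∑ j, Complex.normSq (ψ x j)) := by
  intro x hx
  set Ψ : E3 → V2 := fun y => Tc (ψ y) with hΨdef
  have hΨ : ContDiff ℝ 2 Ψ := Tc.contDiff.comp hψ
  set f : E3 → ℝ := fun y => inner ℝ (Ψ y) (Ψ y) with hfdef
  -- the function in the statement equals f
  have feq : (fun y => ∑ j, Complex.normSq (ψ y j)) = f := by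
    funext y
    show ∑ j : Fin 2, normSq (ψ y j) = (inner ℝ (Ψ y) (Ψ y) : ℝ)
    rw [real_inner_self_eq_norm_sq]
    rw [EuclideanSpace.norm_eq, Real.sq_sqrt (by positivity)]
    congr 1
    funext j
    have : Ψ y j = ψ y j := rfl
    rw [this, Complex.sq_norm]
  -- derivative machinery
  have hψd : ∀ y, HasFDerivAt ψ (fderiv ℝ ψ y) y :=
    fun y => (hψ.differentiable (by norm_num) y).hasFDerivAt
  set P : E3 → (E3 →L[ℝ] V2) := fun y => Tc.comp (fderiv ℝ ψ y) with hPdef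
  have hΨd : ∀ y, HasFDerivAt Ψ (P y) y := fun y => Tc.hasFDerivAt.comp y (hψd y)
  have hfd : ∀ y, HasFDerivAt f ((fderivInnerCLM ℝ (Ψ y, Ψ y)).comp ((P y).prod (P y))) y :=
    fun y => HasFDerivAt.inner ℝ (hΨd y) (hΨd y)
  have dfval : ∀ y v, fderiv ℝ f y v = 2 * inner ℝ (Ψ y) (P y v) := by
    intro y v
    rw [(hfd y).fderiv]
    simp only [ContinuousLinearMap.comp_apply, ContinuousLinearMap.prod_apply,
      fderivInnerCLM_apply]
    rw [real_inner_comm (P y v) (Ψ y)]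
    ring
  have hf2 : ContDiff ℝ 2 f := hΨ.inner (𝕜 := ℝ) hΨ
  have hf1 : ContDiff ℝ 1 (fderiv ℝ f) := hf2.fderiv_right (le_refl 2)
  have hΦx : HasFDerivAt (fderiv ℝ ψ) (fderiv ℝ (fderiv ℝ ψ) x) x :=
    (((hψ.fderiv_right (le_refl 2)).differentiable one_ne_zero) x).hasFDerivAt
  set B : E3 →L[ℝ] E3 →L[ℝ] F2 := fderiv ℝ (fderiv ℝ ψ) x with hBdef
  have hQ : ∀ i : Fin 3, HasFDerivAt (fun y => P y (ee i))
      (Tc.comp ((ContinuousLinearMap.apply ℝ F2 (ee i)).comp B)) x :=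
    fun i => Tc.hasFDerivAt.comp x
      ((ContinuousLinearMap.apply ℝ F2 (ee i)).hasFDerivAt.comp x hΦx)
  -- second derivative in direction (ee i, ee i)
  have hsecond : ∀ i : Fin 3, fderiv ℝ (fun y => fderiv ℝ f y (ee i)) x (ee i)
      = 2 * inner ℝ (P x (ee i)) (P x (ee i)) + 2 * inner ℝ (Ψ x) (Tc (B (ee i) (ee i))) := by
    intro i
    have heq : (fun y => fderiv ℝ f y (ee i)) = fun y => (2:ℝ) * inner ℝ (Ψ y) (P y (ee i)) :=
      funext fun y => dfval y (ee i)
    rw [heq]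
    have h1 : HasFDerivAt (fun y => (inner ℝ (Ψ y) (P y (ee i)) : ℝ))
        ((fderivInnerCLM ℝ (Ψ x, P x (ee i))).comp
          ((P x).prod (Tc.comp ((ContinuousLinearMap.apply ℝ F2 (ee i)).comp B)))) x :=
      HasFDerivAt.inner ℝ (hΨd x) (hQ i)
    rw [fderiv_const_mul h1.differentiableAt]
    rw [h1.fderiv]
    simp only [ContinuousLinearMap.smul_apply, ContinuousLinearMap.comp_apply,
      ContinuousLinearMap.prod_apply, fderivInnerCLM_apply, ContinuousLinearMap.apply_apply,
      smul_eq_mul]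
    ring
  -- relate to iterated derivative
  have hiter : ∀ i : Fin 3, iteratedFDeriv ℝ 2 f x ![ee i, ee i]
      = fderiv ℝ (fun y => fderiv ℝ f y (ee i)) x (ee i) := by
    intro i
    rw [iteratedFDeriv_two_apply]
    have hc : DifferentiableAt ℝ (fderiv ℝ f) x := (hf1.differentiable one_ne_zero) x
    have := fderiv_clm_apply (c := fderiv ℝ f) (u := fun _ => ee i) hc
      (differentiableAt_const _)
    rw [this]
    simp [ContinuousLinearMap.flip_apply]
  -- harmonicity
  have hharm : ∑ j : Fin 3, B (ee j) (ee j) = 0 := harmonic_spinor ψ hψ hdirac x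
  have hlap : elap2 f x = 2 * ∑ i : Fin 3, (inner ℝ (P x (ee i)) (P x (ee i)) : ℝ) := by
    unfold elap2
    have : ∀ i : Fin 3, iteratedFDeriv ℝ 2 f x ![EuclideanSpace.single i 1, EuclideanSpace.single i 1]
        = 2 * inner ℝ (P x (ee i)) (P x (ee i)) + 2 * inner ℝ (Ψ x) (Tc (B (ee i) (ee i))) := by
      intro i
      have := (hiter i).trans (hsecond i)
      exact this
    rw [Finset.sum_congr rfl (fun i _ => this i)]
    rw [Finset.sum_add_distrib, ← Finset.mul_sum, ← Finset.mul_sum]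
    have : ∑ i : Fin 3, (inner ℝ (Ψ x) (Tc (B (ee i) (ee i))) : ℝ) = 0 := by
      rw [← inner_sum, ← map_sum, hharm, map_zero, inner_zero_right]
    rw [this]
    ring
  -- gradient
  have hgrad : ∀ v : E3, (inner ℝ (gradient f x) v : ℝ) = fderiv ℝ f x v := by
    intro v
    unfold gradient
    exact InnerProductSpace.toDual_symm_apply
  have hgnorm : ‖gradient f x‖ ^ 2 = ∑ i : Fin 3, (2 * inner ℝ (Ψ x) (P x (ee i)) : ℝ)^2 := by
    rw [EuclideanSpace.norm_eq, Real.sq_sqrt (by positivity)]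
    refine Finset.sum_congr rfl (fun i _ => ?_)
    have h1 : gradient f x i = inner ℝ (gradient f x) (ee i) := by
      rw [show ee i = EuclideanSpace.single i (1:ℝ) from rfl,
        EuclideanSpace.inner_single_right]
      simp
    rw [Real.norm_eq_abs, _root_.sq_abs, h1, hgrad, dfval]
  -- Cauchy-Schwarz
  set a : ℝ := inner ℝ (Ψ x) (Ψ x) with hadef
  have hΨx : Ψ x ≠ 0 := by
    intro h
    apply hx
    have : ∀ j, ψ x j = 0 := by
      intro j
      have := congrArg (fun v : V2 => v j) h
      exact this
    funext j; exact this j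
  have h0 : (0:ℝ) < ‖Ψ x‖ := norm_pos_iff.mpr hΨx
  have ha : 0 < a := by rw [hadef, real_inner_self_eq_norm_sq]; exact pow_pos h0 2
  have hCS : ‖gradient f x‖ ^ 2 ≤ 4 * a * ∑ i : Fin 3, (inner ℝ (P x (ee i)) (P x (ee i)) : ℝ) := by
    rw [hgnorm]
    rw [Finset.mul_sum]
    refine Finset.sum_le_sum (fun i _ => ?_)
    have h := real_inner_mul_inner_self_le (Ψ x) (P x (ee i))
    rw [← hadef] at h
    calc (2 * inner ℝ (Ψ x) (P x (ee i)) : ℝ)^2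
        = 4 * ((inner ℝ (Ψ x) (P x (ee i)) : ℝ) * inner ℝ (Ψ x) (P x (ee i))) := by ring
      _ ≤ 4 * (a * inner ℝ (P x (ee i)) (P x (ee i))) := by linarith
      _ = 4 * a * inner ℝ (P x (ee i)) (P x (ee i)) := by ring
  -- conclude
  have hax : (∑ j, Complex.normSq (ψ x j)) = a := congrFun feq x
  rw [feq, hax, ge_iff_le, div_le_iff₀ ha, hlap]
  calc ‖gradient f x‖ ^ 2
      ≤ 4 * a * ∑ i : Fin 3, (inner ℝ (P x (ee i)) (P x (ee i)) : ℝ) := hCS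
    _ = 2 * (2 * ∑ i : Fin 3, (inner ℝ (P x (ee i)) (P x (ee i)) : ℝ)) * a := by ring
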